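/- arXiv:1709.02013 — 3 statements merged into one kernel-verified Lean document; each statement's English description precedes it below -/
import Mathlib

section
/- If X is a nonempty set of vertices of the n-dimensional hypercube Q_n such that every vertex of X has at least h neighbors inside X (where 0 ≤ h ≤ n), then |X| ≥ 2^h. -/
/-- The hypercube graph on `Fin n → Bool`: adjacency = Hamming distance 1. -/
def Qn (n : ℕ) : SimpleGraph (Fin n → Bool) where
  Adj x y := (Finset.univ.filter fun i => x i ≠ y i).card = 1
  symm := by
    constructor
    intro x y h
    convert h using 2
    ext i
    simp [ne_comm]
  loopless := by
    constructor
    intro x h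
    simp at h

/-- Bitwise complement. -/
def bcomp (n : ℕ) (x : Fin n → Bool) : Fin n → Bool := fun i => !(x i)

/-- Crossing-edge adjacency in HCN_n. -/
def CAdj (n : ℕ) (u v : (Fin n → Bool) × (Fin n → Bool)) : Prop :=
  (u.1 ≠ u.2 ∧ v = (u.2, u.1)) ∨
  (u.1 = u.2 ∧ v = (bcomp n u.1, bcomp n u.1)) ∨
  (v.1 ≠ v.2 ∧ u = (v.2, v.1)) ∨
  (v.1 = v.2 ∧ u = (bcomp n v.1, bcomp n v.1))

/-- The hierarchical cubic network HCN_n. -/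
def HCN (n : ℕ) : SimpleGraph ((Fin n → Bool) × (Fin n → Bool)) where
  Adj u v := u ≠ v ∧ ((u.1 = v.1 ∧ (Qn n).Adj u.2 v.2) ∨ CAdj n u v)
  symm := by
    constructor
    rintro u v ⟨hne, h⟩
    refine ⟨hne.symm, ?_⟩
    rcases h with ⟨h1, h2⟩ | h | h | h | h
    · exact Or.inl ⟨h1.symm, h2.symm⟩
    · exact Or.inr (Or.inr (Or.inr (Or.inl h)))
    · exact Or.inr (Or.inr (Or.inr (Or.inr h)))
    · exact Or.inr (Or.inl h)
    · exact Or.inr (Or.inr (Or.inl h))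
  loopless := by constructor; intro u h; exact h.1 rfl

/-!
Induct on the dimension, splitting `Qn (n + 1)` along the first coordinate into two copies of
`Qn n`. A vertex has only one neighbour in the other copy, so when `X` meets both copies, each
part has minimum internal degree at least `h - 1` and by induction at least `2 ^ (h - 1)`
elements. When `X` lies inside one copy, it keeps minimum internal degree `h` there.
-/

namespace Finset

variable {β : Type*} {n : ℕ}

noncomputable def consSlice (X : Finset (Fin (n + 1) → β)) (b : β) : Finset (Fin n → β) :=
  X.preimage (Fin.cons (α := fun _ => β) b) (Fin.cons_right_injective _).injOn

@[simp]
theorem mem_consSlice {X : Finset (Fin (n + 1) → β)} {b : β} {y : Fin n → β} :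
    y ∈ X.consSlice b ↔ Fin.cons b y ∈ X := by
  simp [consSlice]

theorem map_consSlice [DecidableEq β] (X : Finset (Fin (n + 1) → β)) (b : β) :
    (X.consSlice b).map ⟨Fin.cons (α := fun _ => β) b, Fin.cons_right_injective _⟩ =
      X.filter (· 0 = b) := by
  ext x
  induction x using Fin.consCases
  simp only [mem_map, mem_consSlice, mem_filter, Fin.cons_zero, Function.Embedding.coeFn_mk,
    Fin.cons_inj]
  grind

theorem card_eq_sum_card_consSlice [Fintype β] [DecidableEq β] (X : Finset (Fin (n + 1) → β)) :
    X.card = ∑ b, (X.consSlice b).card := by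
  rw [card_eq_sum_card_fiberwise (f := (· 0)) (t := univ) fun _ _ => mem_univ _]
  simp_rw [← map_consSlice, card_map]

theorem card_eq_card_consSlice_add_card_consSlice_not (X : Finset (Fin (n + 1) → Bool))
    (b : Bool) : X.card = (X.consSlice b).card + (X.consSlice !b).card := by
  rw [X.card_eq_sum_card_consSlice, Fintype.sum_bool]
  cases b <;> simp [add_comm]

end Finset

theorem hammingDist_cons {β : Type*} [DecidableEq β] {n : ℕ} (a b : β) (x y : Fin n → β) :
    hammingDist (Fin.cons a x : Fin (n + 1) → β) (Fin.cons b y) =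
      (if a = b then 0 else 1) + hammingDist x y := by
  simp only [hammingDist, Finset.card_filter, Fin.sum_univ_succ, Fin.cons_zero, Fin.cons_succ]
  split_ifs <;> simp_all

namespace Qn

open Finset
open scoped Classical

variable {n : ℕ}

theorem adj_iff_hammingDist {x y : Fin n → Bool} : (Qn n).Adj x y ↔ hammingDist x y = 1 :=
  Iff.rfl

theorem adj_cons_cons_iff {a b : Bool} {x y : Fin n → Bool} :
    (Qn (n + 1)).Adj (Fin.cons a x) (Fin.cons b y) ↔
      (a = b ∧ (Qn n).Adj x y) ∨ (a ≠ b ∧ x = y) := by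
  simp only [adj_iff_hammingDist, hammingDist_cons]
  by_cases hab : a = b <;> simp [hab, hammingDist_eq_zero]

noncomputable def degreeIn (X : Finset (Fin n → Bool)) (x : Fin n → Bool) : ℕ :=
  (X.filter fun y => (Qn n).Adj x y).card

theorem degreeIn_eq_zero_of_dim_zero (X : Finset (Fin 0 → Bool)) (x : Fin 0 → Bool) :
    degreeIn X x = 0 :=
  card_eq_zero.2 <| filter_eq_empty_iff.2 fun y _ => Subsingleton.elim x y ▸ (Qn 0).irrefl

theorem degreeIn_cons_le (X : Finset (Fin (n + 1) → Bool)) (b : Bool) (y : Fin n → Bool) :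
    degreeIn X (Fin.cons b y) ≤
      degreeIn (X.consSlice b) y + ((X.consSlice !b).filter (· = y)).card := by
  have hsub : (X.filter fun z => (Qn (n + 1)).Adj (Fin.cons b y) z) ⊆
      ((X.consSlice b).filter fun w => (Qn n).Adj y w).image (Fin.cons b) ∪
        ((X.consSlice !b).filter (· = y)).image (Fin.cons !b) := by
    intro z hz
    induction z using Fin.consCases with | cons c w => ?_
    rw [mem_filter, adj_cons_cons_iff] at hz
    obtain ⟨hzX, ⟨rfl, hadj⟩ | ⟨hne, rfl⟩⟩ := hz
    · exact mem_union_left _ (mem_image_of_mem _ (by simpa [hzX] using hadj))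
    · obtain rfl : c = !b := Bool.eq_not.mpr hne.symm
      exact mem_union_right _ (mem_image_of_mem _ (by simpa using hzX))
  exact (card_le_card hsub).trans <|
    (card_union_le _ _).trans (add_le_add card_image_le card_image_le)

theorem degreeIn_cons_le_add_one (X : Finset (Fin (n + 1) → Bool)) (b : Bool)
    (y : Fin n → Bool) : degreeIn X (Fin.cons b y) ≤ degreeIn (X.consSlice b) y + 1 :=
  (degreeIn_cons_le X b y).trans <| Nat.add_le_add_left (card_le_one.2
    fun _ h₁ _ h₂ => (mem_filter.1 h₁).2.trans (mem_filter.1 h₂).2.symm) _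

theorem degreeIn_cons_le_of_consSlice_not_eq_empty {X : Finset (Fin (n + 1) → Bool)}
    {b : Bool} (hX : X.consSlice (!b) = ∅) (y : Fin n → Bool) :
    degreeIn X (Fin.cons b y) ≤ degreeIn (X.consSlice b) y := by
  simpa [hX] using degreeIn_cons_le X b y

theorem two_pow_le_card_of_le_degreeIn {h : ℕ} {X : Finset (Fin n → Bool)} (hX : X.Nonempty)
    (hdeg : ∀ x ∈ X, h ≤ degreeIn X x) : 2 ^ h ≤ X.card := by
  induction n generalizing h with
  | zero =>
    obtain ⟨x, hx⟩ := hX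
    obtain rfl : h = 0 := by simpa [degreeIn_eq_zero_of_dim_zero] using hdeg x hx
    exact card_pos.2 ⟨x, hx⟩
  | succ n ih =>
    cases h with
    | zero => exact card_pos.2 hX
    | succ h =>
      by_cases hsplit : ∀ b, (X.consSlice b).Nonempty
      · have hslice (b : Bool) : 2 ^ h ≤ (X.consSlice b).card :=
          ih (hsplit b) fun y hy => Nat.le_of_succ_le_succ <|
            (hdeg _ (mem_consSlice.1 hy)).trans (degreeIn_cons_le_add_one X b y)
        rw [X.card_eq_card_consSlice_add_card_consSlice_not false, pow_succ, mul_two]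
        exact add_le_add (hslice _) (hslice _)
      · obtain ⟨b', hb'⟩ := not_forall.1 hsplit
        obtain ⟨b, hb⟩ : ∃ b, X.consSlice (!b) = ∅ :=
          ⟨!b', by rwa [Bool.not_not, ← not_nonempty_iff_eq_empty]⟩
        have hcard : X.card = (X.consSlice b).card := by
          simp [X.card_eq_card_consSlice_add_card_consSlice_not b, hb]
        rw [hcard]
        exact ih (card_pos.1 (hcard ▸ card_pos.2 hX)) fun y hy =>
          (hdeg _ (mem_consSlice.1 hy)).trans (degreeIn_cons_le_of_consSlice_not_eq_empty hb y)

end Qn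

open scoped Classical in
theorem stmt0_general (n h : ℕ) (X : Finset (Fin n → Bool)) (hX : X.Nonempty)
    (hdeg : ∀ x ∈ X, h ≤ (X.filter (fun y => (Qn n).Adj x y)).card) :
    2 ^ h ≤ X.card :=
  Qn.two_pow_le_card_of_le_degreeIn hX hdeg

open scoped Classical in
/-- If every vertex of a nonempty set X in Q_n has at least h neighbors inside X
(0 ≤ h ≤ n), then |X| ≥ 2^h. -/
theorem stmt0 (n h : ℕ) (hh : h ≤ n) (X : Finset (Fin n → Bool)) (hX : X.Nonempty)
    (hdeg : ∀ x ∈ X, h ≤ (X.filter (fun y => (Qn n).Adj x y)).card) :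
    2 ^ h ≤ X.card :=
  stmt0_general n h X hX hdeg
end

section
/- Let n ≥ 2 and 0 ≤ h ≤ n−1. Then HCN_n has an h-vertex-cut of size 2^h·(n+1−h): there exists a set S of vertices with |S| = 2^h·(n+1−h) such that HCN_n − S is disconnected and every vertex of HCN_n − S has at least h neighbors in HCN_n − S. Hence κ^h(HCN_n) ≤ 2^h·(n+1−h). -/
open Finset

namespace SimpleGraph

variable {V : Type*} (G : SimpleGraph V)

/-- `Connected` includes nonemptiness, so the first conjunct is what keeps `S = univ` from
being an `h`-vertex-cut. -/
def IsHVertexCut [Fintype V] [DecidableEq V] [DecidableRel G.Adj] (h : ℕ) (S : Finset V) :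
    Prop :=
  ({v | v ∉ S} : Set V).Nonempty ∧ ¬ (G.induce {v | v ∉ S}).Connected ∧
    ∀ v ∉ S, h ≤ (Finset.univ.filter (fun w => w ∉ S ∧ G.Adj v w)).card

variable {G}

theorem not_connected_induce_of_adj_mem {s A : Set V}
    (hA : ∀ ⦃u v⦄, u ∈ A → v ∈ s → G.Adj u v → v ∈ A)
    {a b : V} (ha : a ∈ A) (has : a ∈ s) (hb : b ∉ A) (hbs : b ∈ s) :
    ¬ (G.induce s).Connected := by
  have walk_mem : ∀ {x y : s} (p : (G.induce s).Walk x y), (x : V) ∈ A → (y : V) ∈ A := by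
    intro x y p
    induction p with
    | nil => exact id
    | cons hadj _ ih => exact fun hx => ih (hA hx (Subtype.prop _) hadj)
  intro hconn
  obtain ⟨p⟩ := hconn.preconnected ⟨a, has⟩ ⟨b, hbs⟩
  exact hb (walk_mem p ha)

theorem sub_card_filter_mem_le_card_filter_notMem_adj [Fintype V] [DecidableEq V]
    [DecidableRel G.Adj] {ι : Type*} [Fintype ι] (S : Finset V) {v : V} {f : ι → V}
    (hf : Function.Injective f) (hadj : ∀ i, G.Adj v (f i)) :
    Fintype.card ι - #{i | f i ∈ S} ≤ #{w | w ∉ S ∧ G.Adj v w} := by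
  have hsplit := card_filter_add_card_filter_not (s := univ) (fun i => f i ∈ S)
  rw [card_univ] at hsplit
  calc Fintype.card ι - #{i | f i ∈ S} = #{i | f i ∉ S} := by omega
    _ ≤ #{w | w ∉ S ∧ G.Adj v w} :=
      card_le_card_of_injOn f (fun i hi => by simp_all) hf.injOn

end SimpleGraph

section FlipBit

variable {ι : Type*} [DecidableEq ι]

def flipBit (i : ι) (y : ι → Bool) : ι → Bool := Function.update y i (!y i)

@[simp]
theorem flipBit_apply_self (i : ι) (y : ι → Bool) : flipBit i y i = !y i :=
  Function.update_self ..

theorem flipBit_apply_of_ne {i j : ι} (h : j ≠ i) (y : ι → Bool) : flipBit i y j = y j :=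
  Function.update_of_ne h ..

theorem flipBit_apply (i j : ι) (y : ι → Bool) :
    flipBit i y j = if j = i then !y j else y j := by
  split_ifs with h
  · subst h; simp
  · exact flipBit_apply_of_ne h y

@[simp]
theorem flipBit_flipBit (i : ι) (y : ι → Bool) : flipBit i (flipBit i y) = y := by
  ext j; simp only [flipBit_apply]; split_ifs <;> simp

theorem flipBit_comm (i j : ι) (y : ι → Bool) :
    flipBit i (flipBit j y) = flipBit j (flipBit i y) := by
  ext k; simp only [flipBit_apply]; split_ifs <;> simp_all

theorem flipBit_left_injective (y : ι → Bool) : Function.Injective fun i => flipBit i y := by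
  intro i j hij
  by_contra hne
  have := congrFun hij i
  simp [flipBit_apply_of_ne hne] at this

theorem card_filter_ne_eq_one_iff [Fintype ι] {y z : ι → Bool} :
    #{i | y i ≠ z i} = 1 ↔ ∃ i, z = flipBit i y := by
  simp only [card_eq_one, Finset.ext_iff, mem_filter, mem_univ, true_and, mem_singleton,
    funext_iff, flipBit_apply]
  refine exists_congr fun i => forall_congr' fun j => ?_
  by_cases j = i <;> cases y j <;> cases z j <;> simp_all

end FlipBit

theorem Qn_adj_iff {n : ℕ} {y z : Fin n → Bool} : (Qn n).Adj y z ↔ ∃ i, z = flipBit i y :=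
  card_filter_ne_eq_one_iff

theorem const_false_ne_const_true {ι : Type*} [Nonempty ι] :
    (fun _ => false : ι → Bool) ≠ fun _ => true :=
  Function.const_injective.ne Bool.false_ne_true

section Subcube

variable {ι : Type*} [Fintype ι] [DecidableEq ι]

def subcube (T : Finset ι) : Finset (ι → Bool) :=
  Fintype.piFinset fun i => if i ∈ T then univ else {false}

variable {T : Finset ι}

theorem mem_subcube {y : ι → Bool} : y ∈ subcube T ↔ ∀ i ∉ T, y i = false := by
  simp only [subcube, Fintype.mem_piFinset]
  refine forall_congr' fun i => ?_
  split_ifs <;> simp_all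

theorem card_subcube : #(subcube T) = 2 ^ #T := by
  simp [subcube, Fintype.card_piFinset, apply_ite Finset.card, prod_ite_mem]

theorem const_false_mem_subcube : (fun _ => false) ∈ subcube T :=
  mem_subcube.2 fun _ _ => rfl

theorem const_true_notMem_subcube (hT : Tᶜ.Nonempty) : (fun _ => true) ∉ subcube T := by
  obtain ⟨j, hj⟩ := hT
  simpa [mem_subcube] using ⟨j, mem_compl.1 hj⟩

theorem flipBit_mem_subcube_iff {i : ι} (hi : i ∈ T) {y : ι → Bool} :
    flipBit i y ∈ subcube T ↔ y ∈ subcube T := by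
  simp only [mem_subcube]
  refine forall₂_congr fun j hj => ?_
  rw [flipBit_apply_of_ne (ne_of_mem_of_not_mem hi hj).symm]

theorem flipBit_notMem_subcube {i : ι} (hi : i ∉ T) {y : ι → Bool} (hy : y ∈ subcube T) :
    flipBit i y ∉ subcube T := fun h => by
  simpa [mem_subcube.1 hy i hi] using mem_subcube.1 h i hi

theorem injOn_flipBit_subcube_product_compl :
    Set.InjOn (fun p : (ι → Bool) × ι => flipBit p.2 p.1) ↑(subcube T ×ˢ Tᶜ) := by
  rintro ⟨y, i⟩ hyi ⟨y', i'⟩ hyi' h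
  simp only [coe_product, Set.mem_prod, mem_coe, mem_compl] at hyi hyi' h
  obtain rfl : i = i' := by
    by_contra hne
    have := congrFun h i
    simp [flipBit_apply_of_ne hne, mem_subcube.1 hyi.1 i hyi.2,
      mem_subcube.1 hyi'.1 i hyi.2] at this
  simpa using congrArg (flipBit i) h

end Subcube

namespace HCN

variable {n : ℕ}

theorem bcomp_bcomp (x : Fin n → Bool) : bcomp n (bcomp n x) = x := by
  ext; simp [bcomp]

def crossNbr (u : (Fin n → Bool) × (Fin n → Bool)) : (Fin n → Bool) × (Fin n → Bool) :=
  if u.1 = u.2 then (bcomp n u.1, bcomp n u.1) else u.swap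

theorem eq_crossNbr_of_cAdj {u v : (Fin n → Bool) × (Fin n → Bool)} (h : CAdj n u v) :
    v = crossNbr u := by
  rcases h with ⟨hu, rfl⟩ | ⟨hu, rfl⟩ | ⟨hv, rfl⟩ | ⟨hv, rfl⟩
  · simp [crossNbr, hu, Prod.swap]
  · simp [crossNbr, hu]
  · simp [crossNbr, Ne.symm hv]
  · obtain ⟨x, y⟩ := v
    simp_all [crossNbr, bcomp_bcomp]

theorem adj_flipBit (x y : Fin n → Bool) (i : Fin n) : (HCN n).Adj (x, y) (x, flipBit i y) :=
  have hq : (Qn n).Adj y (flipBit i y) := Qn_adj_iff.2 ⟨i, rfl⟩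
  ⟨fun h => hq.ne (congrArg Prod.snd h), Or.inl ⟨rfl, hq⟩⟩

theorem eq_flipBit_or_eq_crossNbr_of_adj {u v : (Fin n → Bool) × (Fin n → Bool)}
    (h : (HCN n).Adj u v) : (v.1 = u.1 ∧ ∃ i, v.2 = flipBit i u.2) ∨ v = crossNbr u := by
  rcases h.2 with ⟨h1, hq⟩ | hc
  · exact Or.inl ⟨h1.symm, Qn_adj_iff.1 hq⟩
  · exact Or.inr (eq_crossNbr_of_cAdj hc)

/-- The neighbourhood of `{0} × subcube T`. -/
def cut (T : Finset (Fin n)) : Finset ((Fin n → Bool) × (Fin n → Bool)) :=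
  ((subcube T ×ˢ Tᶜ).image fun p => (fun _ => false, flipBit p.2 p.1)) ∪
    (((subcube T).erase fun _ => false).image fun y => (y, fun _ => false)) ∪
    {(fun _ => true, fun _ => true)}

variable {T : Finset (Fin n)}

theorem mem_cut {x y : Fin n → Bool} :
    (x, y) ∈ cut T ↔
      (x = (fun _ => false) ∧ ∃ z ∈ subcube T, ∃ j ∉ T, y = flipBit j z) ∨
      (x ∈ subcube T ∧ x ≠ (fun _ => false) ∧ y = fun _ => false) ∨
      (x = (fun _ => true) ∧ y = fun _ => true) := by
  simp only [cut, mem_union, mem_image, mem_product, mem_compl, mem_erase, mem_singleton,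
    Prod.mk.injEq, Prod.exists]
  grind

theorem card_cut (hT : Tᶜ.Nonempty) : #(cut T) = 2 ^ #T * (n + 1 - #T) := by
  have : Nonempty (Fin n) := ⟨hT.choose⟩
  have hdisj₁ : Disjoint ((subcube T ×ˢ Tᶜ).image fun p => ((fun _ => false), flipBit p.2 p.1))
      (((subcube T).erase fun _ => false).image fun y => (y, fun _ => false)) := by
    simp only [disjoint_left, mem_image, mem_erase]
    rintro _ ⟨p, -, rfl⟩ ⟨y, ⟨hy0, -⟩, hy⟩
    exact hy0 (congrArg Prod.fst hy)
  have hdisj₂ : Disjoint (((subcube T ×ˢ Tᶜ).image fun p => ((fun _ => false), flipBit p.2 p.1)) ∪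
      (((subcube T).erase fun _ => false).image fun y => (y, fun _ => false)))
      {((fun _ => true), fun _ => true)} := by
    simp only [disjoint_singleton_right, mem_union, mem_image, not_or, not_exists, not_and]
    exact ⟨fun p _ h => const_false_ne_const_true (congrArg Prod.fst h),
      fun y _ h => const_false_ne_const_true (congrArg Prod.snd h)⟩
  have inside_injOn : Set.InjOn (fun p : (Fin n → Bool) × Fin n =>
      ((fun _ => false : Fin n → Bool), flipBit p.2 p.1)) ↑(subcube T ×ˢ Tᶜ) :=
    (Prod.mk_right_injective _).comp_injOn injOn_flipBit_subcube_product_compl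
  have hpow : 1 ≤ 2 ^ #T := Nat.one_le_two_pow
  have hTn : #T < n := by simpa [card_compl] using card_pos.2 hT
  rw [cut, card_union_of_disjoint hdisj₂, card_union_of_disjoint hdisj₁,
    card_image_of_injOn inside_injOn, card_image_of_injective _ (Prod.mk_left_injective _),
    card_product, card_erase_of_mem const_false_mem_subcube, card_compl, card_singleton,
    card_subcube, Fintype.card_fin, show n + 1 - #T = n - #T + 1 by omega, mul_add_one]
  omega

theorem mem_subcube_of_adj_of_notMem_cut {y : Fin n → Bool} (hy : y ∈ subcube T)
    {v : (Fin n → Bool) × (Fin n → Bool)} (hadj : (HCN n).Adj (fun _ => false, y) v)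
    (hv : v ∉ cut T) : v.1 = (fun _ => false) ∧ v.2 ∈ subcube T := by
  obtain ⟨x, z⟩ := v
  rcases eq_flipBit_or_eq_crossNbr_of_adj hadj with ⟨rfl, i, rfl⟩ | hcross
  · by_cases hi : i ∈ T
    · exact ⟨rfl, (flipBit_mem_subcube_iff hi).2 hy⟩
    · exact absurd (mem_cut.2 (Or.inl ⟨rfl, y, hy, i, hi, rfl⟩)) hv
  · refine absurd (mem_cut.2 ?_) hv
    unfold crossNbr at hcross
    split_ifs at hcross with hy0
    · obtain ⟨rfl, rfl⟩ := Prod.mk.inj hcross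
      exact Or.inr (Or.inr ⟨rfl, rfl⟩)
    · obtain ⟨rfl, rfl⟩ := Prod.mk.inj hcross
      exact Or.inr (Or.inl ⟨hy, Ne.symm hy0, rfl⟩)

theorem filter_flipBit_mem_cut_subset_compl {y : Fin n → Bool}
    (hv : ((fun _ => false), y) ∉ cut T) :
    ({i | ((fun _ => false), flipBit i y) ∈ cut T} : Finset (Fin n)) ⊆ Tᶜ := by
  intro i hi
  have : Nonempty (Fin n) := ⟨i⟩
  rw [mem_filter_univ, mem_cut] at hi
  rcases hi with ⟨-, z, hz, j, hj, hij⟩ | ⟨-, h0, -⟩ | ⟨h01, -⟩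
  · refine mem_compl.2 fun hiT => hv (mem_cut.2 (Or.inl ⟨rfl, flipBit i z, ?_, j, hj, ?_⟩))
    · exact (flipBit_mem_subcube_iff hiT).2 hz
    · rw [flipBit_comm, ← hij, flipBit_flipBit]
  · exact absurd rfl h0
  · exact absurd h01 const_false_ne_const_true

theorem card_filter_flipBit_mem_cut_le_one (hT : Tᶜ.Nonempty) {x y : Fin n → Bool}
    (hx : x ≠ fun _ => false) : #{i | (x, flipBit i y) ∈ cut T} ≤ 1 := by
  refine card_le_one.2 fun i hi j hj => flipBit_left_injective y ?_
  rw [mem_filter_univ, mem_cut] at hi hj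
  rcases hi with ⟨hx0, -⟩ | ⟨hxT, -, hi⟩ | ⟨hx1, hi⟩ <;>
    rcases hj with ⟨hx0, -⟩ | ⟨hxT, -, hj⟩ | ⟨hx1, hj⟩
  all_goals first
    | exact absurd hx0 hx
    | exact hi.trans hj.symm
    | exact absurd (hx1 ▸ hxT) (const_true_notMem_subcube hT)

theorem card_filter_flipBit_mem_cut_le (hT : Tᶜ.Nonempty) {x y : Fin n → Bool}
    (hv : (x, y) ∉ cut T) : #{i | (x, flipBit i y) ∈ cut T} ≤ #Tᶜ := by
  by_cases hx : x = fun _ => false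
  · subst hx
    exact card_le_card (filter_flipBit_mem_cut_subset_compl hv)
  · exact (card_filter_flipBit_mem_cut_le_one hT hx).trans (card_pos.2 hT)

open scoped Classical in
theorem isHVertexCut_cut (hT : Tᶜ.Nonempty) : (HCN n).IsHVertexCut #T (cut T) := by
  obtain ⟨j, hj⟩ := hT
  have : Nonempty (Fin n) := ⟨j⟩
  have hj0 : (flipBit j fun _ => false) ∉ subcube T :=
    flipBit_notMem_subcube (mem_compl.1 hj) const_false_mem_subcube
  have hj0' : (flipBit j fun _ => false) ≠ fun _ => false :=
    fun h => by rw [h] at hj0; exact hj0 const_false_mem_subcube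
  have origin_notMem : ((fun _ => false), fun _ => false) ∉ cut T := by
    rw [mem_cut]
    rintro (⟨-, z, hz, i, hi, h⟩ | ⟨-, h0, -⟩ | ⟨h01, -⟩)
    · exact flipBit_notMem_subcube hi hz (h ▸ const_false_mem_subcube)
    · exact h0 rfl
    · exact const_false_ne_const_true h01
  have witness_notMem : (flipBit j fun _ => false, fun _ => false) ∉ cut T := by
    rw [mem_cut]
    rintro (⟨h0, -⟩ | ⟨hT0, -⟩ | ⟨-, h01⟩)
    · exact hj0' h0
    · exact hj0 hT0
    · exact const_false_ne_const_true h01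
  refine ⟨⟨_, origin_notMem⟩, ?_, fun ⟨x, y⟩ hv => ?_⟩
  · refine SimpleGraph.not_connected_induce_of_adj_mem
      (A := {u | u.1 = (fun _ => false) ∧ u.2 ∈ subcube T}) ?_ ⟨rfl, const_false_mem_subcube⟩
      origin_notMem (fun h => hj0' h.1) witness_notMem
    rintro ⟨x, y⟩ v ⟨rfl, hy⟩ hv hadj
    exact mem_subcube_of_adj_of_notMem_cut hy hadj hv
  · have hbad := card_filter_flipBit_mem_cut_le ⟨j, hj⟩ hv
    have hgood := SimpleGraph.sub_card_filter_mem_le_card_filter_notMem_adj (cut T)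
      (f := fun i => (x, flipBit i y))
      ((Prod.mk_right_injective x).comp (flipBit_left_injective y)) (adj_flipBit x y)
    have hTn : #T < n := by simpa [card_compl] using card_pos.2 ⟨j, hj⟩
    rw [card_compl, Fintype.card_fin] at hbad
    rw [Fintype.card_fin] at hgood
    exact le_trans (by omega) hgood

end HCN

open scoped Classical in
/-- HCN_n (n ≥ 2, 0 ≤ h ≤ n-1) has an h-vertex-cut of size 2^h (n+1-h): removing it
disconnects the graph while every remaining vertex keeps at least h neighbors.
Hence κ^h(HCN_n) ≤ 2^h (n+1-h). -/
theorem stmt15 (n h : ℕ) (hn : 2 ≤ n) (hh : h ≤ n - 1) :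
    ∃ S : Finset ((Fin n → Bool) × (Fin n → Bool)),
      S.card = 2 ^ h * (n + 1 - h) ∧
      ({v | v ∉ S} : Set ((Fin n → Bool) × (Fin n → Bool))).Nonempty ∧
      ¬ ((HCN n).induce {v | v ∉ S}).Connected ∧
      ∀ v ∉ S, h ≤ (Finset.univ.filter
        (fun w => w ∉ S ∧ (HCN n).Adj v w)).card := by
  obtain ⟨T, -, rfl⟩ := exists_subset_card_eq (s := (univ : Finset (Fin n))) (n := h)
    (by rw [card_univ, Fintype.card_fin]; omega)
  have hT : Tᶜ.Nonempty := card_pos.1 (by rw [card_compl, Fintype.card_fin]; omega)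
  exact ⟨HCN.cut T, HCN.card_cut hT, HCN.isHVertexCut_cut hT⟩
end

section
/- The connectivity and edge-connectivity of HCN_n both equal n+1 for n ≥ 1: at least n+1 vertices (or edges) must be removed to disconnect HCN_n, and removing the n+1 neighbors (or incident edges) of a single vertex disconnects it. -/
open SimpleGraph Finset

namespace SimpleGraph

variable {V : Type*} {G : SimpleGraph V}

lemma reachable_induce_of_hom {W : Type*} {K : SimpleGraph W} (hK : K.Preconnected)
    (f : K →g G) {s : Set V} (hf : ∀ a, f a ∈ s) (a b : W) :
    (G.induce s).Reachable ⟨f a, hf a⟩ ⟨f b, hf b⟩ :=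
  (hK a b).map (G := K) (G' := G.induce s)
    { toFun := fun a => ⟨f a, hf a⟩, map_rel' := f.map_rel' }

lemma reachable_induce_of_adj {s : Set V} {u v : V} (h : G.Adj u v) (hu : u ∈ s) (hv : v ∈ s) :
    (G.induce s).Reachable ⟨u, hu⟩ ⟨v, hv⟩ :=
  Adj.reachable h

lemma Reachable.exists_adj {u v : V} (h : G.Reachable u v) (hne : u ≠ v) : ∃ w, G.Adj u w :=
  h.elim fun p => ⟨p.snd, p.adj_snd (Walk.not_nil_of_ne hne)⟩

lemma exists_forall_reachable_deleteEdges [DecidableEq V] {n : ℕ}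
    (hG : ∀ S : Finset V, S.card ≤ n → (G.induce {v | v ∉ S}).Preconnected)
    {F : Finset (Sym2 V)} (hF : F.card ≤ n) (u : V) :
    ∃ S : Finset V, S.card ≤ n ∧ ∀ w ∉ S, (G.deleteEdges F).Reachable u w := by
  have hpick : ∀ e : Sym2 V, ∃ w, ¬e.IsDiag → w ∈ e ∧ w ≠ u := fun e => by
    by_cases h : u ∈ e
    · exact ⟨Sym2.Mem.other h, fun hd => ⟨Sym2.other_mem h, Sym2.other_ne hd h⟩⟩
    · induction e using Sym2.ind with
      | h a b => exact ⟨a, fun _ => ⟨Sym2.mem_mk_left a b, fun ha => h (ha ▸ Sym2.mem_mk_left a b)⟩⟩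
  choose pick hpick using hpick
  set S := (F.image pick).erase u
  have hS : ∀ a b, a ∉ S → b ∉ S → G.Adj a b → s(a, b) ∉ F := by
    intro a b ha hb hab he
    obtain ⟨hmem, hne⟩ := hpick s(a, b) (Sym2.mk_isDiag_iff.not.2 hab.ne)
    have : pick s(a, b) ∈ S := mem_erase.2 ⟨hne, mem_image_of_mem pick he⟩
    rcases Sym2.mem_iff.1 hmem with h | h
    exacts [ha (h ▸ this), hb (h ▸ this)]
  let ι : G.induce {v | v ∉ S} →g G.deleteEdges F :=
    { toFun := Subtype.val
      map_rel' := fun {a b} hab => deleteEdges_adj.2 ⟨hab, hS a b a.2 b.2 hab⟩ }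
  have hSn : S.card ≤ n := (card_erase_le.trans card_image_le).trans hF
  exact ⟨S, hSn, fun w hw => (hG S hSn ⟨u, notMem_erase u _⟩ ⟨w, hw⟩).map ι⟩

variable [Fintype V] [DecidableEq V]

lemma preconnected_deleteEdges_of_preconnected_induce {n : ℕ} (hV : 2 * n < Fintype.card V)
    (hG : ∀ S : Finset V, S.card ≤ n → (G.induce {v | v ∉ S}).Preconnected)
    {F : Finset (Sym2 V)} (hF : F.card ≤ n) : (G.deleteEdges F).Preconnected := by
  intro u v
  obtain ⟨Su, hSu, hu⟩ := exists_forall_reachable_deleteEdges hG hF u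
  obtain ⟨Sv, hSv, hv⟩ := exists_forall_reachable_deleteEdges hG hF v
  have hlt : (Su ∪ Sv).card < (univ : Finset V).card := by
    rw [card_univ]
    linarith [card_union_le Su Sv]
  obtain ⟨w, -, hw⟩ := exists_mem_notMem_of_card_lt_card hlt
  rw [mem_union, not_or] at hw
  exact (hu w hw.1).trans (hv w hw.2).symm

lemma exists_finset_card_eq_degree_not_connected_induce [DecidableRel G.Adj] (v : V)
    (hv : G.degree v + 1 < Fintype.card V) :
    ∃ S : Finset V, S.card = G.degree v ∧ {u | u ∉ S}.Nonempty ∧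
      ¬(G.induce {u | u ∉ S}).Connected := by
  have hlt : (insert v (G.neighborFinset v)).card < (univ : Finset V).card := by
    rw [card_univ]
    exact (card_insert_le _ _).trans_lt (G.card_neighborFinset_eq_degree v ▸ hv)
  obtain ⟨w, -, hw⟩ := exists_mem_notMem_of_card_lt_card hlt
  rw [mem_insert, not_or] at hw
  refine ⟨G.neighborFinset v, G.card_neighborFinset_eq_degree v,
    ⟨v, G.notMem_neighborFinset_self v⟩, fun h => ?_⟩
  obtain ⟨b, hb⟩ := (h.preconnected ⟨v, G.notMem_neighborFinset_self v⟩ ⟨w, hw.2⟩).exists_adj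
    (fun h => hw.1 (congrArg Subtype.val h).symm)
  exact b.2 ((G.mem_neighborFinset v b).2 hb)

lemma exists_finset_card_eq_degree_not_connected_deleteEdges [DecidableRel G.Adj] [Nontrivial V]
    (v : V) :
    ∃ F : Finset (Sym2 V), ↑F ⊆ G.edgeSet ∧ F.card = G.degree v ∧
      ¬(G.deleteEdges ↑F).Connected := by
  refine ⟨G.incidenceFinset v, by simpa using G.incidenceSet_subset v,
    G.card_incidenceFinset_eq_degree v, fun h => ?_⟩
  obtain ⟨w, hw⟩ := exists_ne v
  obtain ⟨b, hb⟩ := (h.preconnected v w).exists_adj hw.symm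
  rw [deleteEdges_adj, coe_incidenceFinset, mk'_mem_incidenceSet_left_iff] at hb
  exact hb.2 hb.1

end SimpleGraph

lemma Finset.card_preimage_lt {α β : Type*} {f : α → β} (hf : Function.Injective f)
    {T : Finset β} {t : β} (ht : t ∈ T) (htf : t ∉ Set.range f) :
    (T.preimage f hf.injOn).card < T.card := by
  classical
  rw [card_preimage]
  exact card_lt_card (filter_ssubset.2 ⟨t, ht, htf⟩)

namespace Qn

variable {n : ℕ}

lemma adj_iff {x y : Fin n → Bool} :
    (Qn n).Adj x y ↔ ∃ i, Function.update x i (!x i) = y := by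
  change (univ.filter fun i => x i ≠ y i).card = 1 ↔ _
  rw [card_eq_one]
  refine exists_congr fun i => ⟨fun h => funext fun j => ?_, fun h => ?_⟩
  · have hj := Finset.ext_iff.1 h j
    simp only [mem_filter, mem_univ, true_and, mem_singleton] at hj
    by_cases hji : j = i
    · subst hji
      rw [Function.update_self, Bool.eq_not_of_ne (hj.2 rfl), Bool.not_not]
    · simpa [hji] using (not_not.1 (hj.not.2 hji))
  · subst h
    ext j
    by_cases hji : j = i
    · subst hji; simp
    · simp [hji]

lemma adj_cons {z z' : Fin n → Bool} (b : Bool) (h : (Qn n).Adj z z') :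
    (Qn (n + 1)).Adj (Fin.cons b z) (Fin.cons b z') := by
  obtain ⟨i, rfl⟩ := adj_iff.1 h
  exact adj_iff.2 ⟨i.succ, by rw [← Fin.cons_update, Fin.cons_succ]⟩

lemma adj_cons_of_ne {b c : Bool} (h : b ≠ c) (z : Fin n → Bool) :
    (Qn (n + 1)).Adj (Fin.cons b z) (Fin.cons c z) :=
  adj_iff.2 ⟨0, by rw [Fin.update_cons_zero, Fin.cons_zero, (Bool.eq_not_of_ne h.symm).symm]⟩

def consHom (b : Bool) : Qn n →g Qn (n + 1) where
  toFun z := Fin.cons b z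
  map_rel' h := adj_cons b h

section faults

variable {T : Finset (Fin (n + 1) → Bool)}

noncomputable def halfFaults (T : Finset (Fin (n + 1) → Bool)) (b : Bool) :
    Finset (Fin n → Bool) :=
  T.preimage (fun z => Fin.cons b z) (Fin.cons_right_injective (α := fun _ => Bool) b).injOn

@[simp] lemma mem_halfFaults {b : Bool} {z : Fin n → Bool} :
    z ∈ halfFaults T b ↔ Fin.cons b z ∈ T :=
  mem_preimage

lemma card_halfFaults_lt {b : Bool} {w : Fin n → Bool} (hw : Fin.cons (!b) w ∈ T) :
    (halfFaults T b).card < T.card :=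
  card_preimage_lt (Fin.cons_right_injective (α := fun _ => Bool) b) hw
    (by rintro ⟨v, hv⟩; simpa using congrFun hv 0)

lemma reachable_induce_cons {b c : Bool} {z : Fin n → Bool}
    (hb : Fin.cons b z ∉ T) (hc : Fin.cons c z ∉ T) :
    ((Qn (n + 1)).induce {x | x ∉ T}).Reachable ⟨Fin.cons b z, hb⟩ ⟨Fin.cons c z, hc⟩ := by
  obtain rfl | h := eq_or_ne b c
  · rfl
  · exact reachable_induce_of_adj (adj_cons_of_ne h z) hb hc

lemma reachable_induce_cons_of_preconnected {b : Bool}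
    (hT : ((Qn n).induce {z | z ∉ halfFaults T b}).Preconnected) {z z' : Fin n → Bool}
    (hz : Fin.cons b z ∉ T) (hz' : Fin.cons b z' ∉ T) :
    ((Qn (n + 1)).induce {x | x ∉ T}).Reachable ⟨Fin.cons b z, hz⟩ ⟨Fin.cons b z', hz'⟩ :=
  reachable_induce_of_hom hT ((consHom b).comp (Embedding.induce _).toHom) (s := {x | x ∉ T})
    (fun a h => a.2 (mem_halfFaults.2 h)) ⟨z, mt mem_halfFaults.1 hz⟩
    ⟨z', mt mem_halfFaults.1 hz'⟩

end faults

theorem induce_succ_preconnected : ∀ {n : ℕ} (T : Finset (Fin (n + 1) → Bool)), T.card ≤ n →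
    ((Qn (n + 1)).induce {x | x ∉ T}).Preconnected
  | 0, T, _ => by
    rintro ⟨x, hx⟩ ⟨y, hy⟩
    induction x using Fin.consCases with | cons b z => ?_
    induction y using Fin.consCases with | cons c z' => ?_
    obtain rfl := Subsingleton.elim z z'
    exact reachable_induce_cons hx hy
  | n + 1, T, hT => by
    have ih := fun b (hb : (halfFaults T b).card ≤ n) => induce_succ_preconnected _ hb
    suffices hub : ∃ (c : Bool) (z : Fin (n + 1) → Bool) (hz : Fin.cons c z ∉ T),
        ∀ b w (hw : Fin.cons b w ∉ T),
        ((Qn (n + 2)).induce {x | x ∉ T}).Reachable ⟨Fin.cons b w, hw⟩ ⟨Fin.cons c z, hz⟩ by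
      obtain ⟨c, z, hz, hub⟩ := hub
      rintro ⟨x, hx⟩ ⟨y, hy⟩
      induction x using Fin.consCases with | cons b w => ?_
      induction y using Fin.consCases with | cons b' w' => ?_
      exact (hub _ _ hx).trans (hub _ _ hy).symm
    by_cases hclean : ∃ c, ∀ w, Fin.cons c w ∉ T
    · obtain ⟨c, hc⟩ := hclean
      have hcard : (halfFaults T c).card = 0 :=
        card_eq_zero.2 (eq_empty_of_forall_notMem fun w hw => hc w (mem_halfFaults.1 hw))
      exact ⟨c, 0, hc 0, fun b w hw => (reachable_induce_cons hw (hc w)).trans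
        (reachable_induce_cons_of_preconnected (ih c (by omega)) (hc w) (hc 0))⟩
    · push Not at hclean
      have hlt : (T.image Fin.tail).card < (univ : Finset (Fin (n + 1) → Bool)).card := by
        rw [card_univ, Fintype.card_fun, Fintype.card_bool, Fintype.card_fin]
        exact card_image_le.trans_lt (hT.trans_lt Nat.lt_two_pow_self)
      obtain ⟨z, -, hz⟩ := exists_mem_notMem_of_card_lt_card hlt
      have hzT : ∀ c, Fin.cons c z ∉ T := fun c h => hz (mem_image.2 ⟨_, h, Fin.tail_cons _ _⟩)
      refine ⟨false, z, hzT false, fun b w hw => ?_⟩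
      obtain ⟨w', hw'⟩ := hclean (!b)
      have hcard := card_halfFaults_lt hw'
      exact (reachable_induce_cons_of_preconnected (ih b (by omega)) hw (hzT b)).trans
        (reachable_induce_cons (hzT b) (hzT false))

theorem induce_preconnected {T : Finset (Fin n → Bool)} (hT : T.card < n) :
    ((Qn n).induce {x | x ∉ T}).Preconnected := by
  cases n with
  | zero => exact absurd hT (Nat.not_lt_zero _)
  | succ n => exact induce_succ_preconnected T (Nat.lt_succ_iff.1 hT)

end Qn

namespace HCN

variable {n : ℕ}

def cross (n : ℕ) (p : (Fin n → Bool) × (Fin n → Bool)) : (Fin n → Bool) × (Fin n → Bool) :=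
  if p.1 = p.2 then (bcomp n p.1, bcomp n p.1) else p.swap

lemma bcomp_ne (hn : 1 ≤ n) (x : Fin n → Bool) : bcomp n x ≠ x :=
  fun h => Bool.not_ne_self (x ⟨0, hn⟩) (congrFun h _)

lemma eq_bcomp_iff {x y : Fin n → Bool} : x = bcomp n y ↔ y = bcomp n x := by
  constructor <;> rintro rfl <;> funext i <;> simp [bcomp]

lemma cAdj_iff {p q : (Fin n → Bool) × (Fin n → Bool)} : CAdj n p q ↔ q = cross n p := by
  obtain ⟨a, b⟩ := p
  obtain ⟨c, d⟩ := q
  unfold CAdj cross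
  by_cases hab : a = b <;> by_cases hcd : c = d <;>
    simp [hab, hcd, Prod.ext_iff, eq_bcomp_iff] <;> rintro rfl rfl <;> simp_all

lemma cross_fst_ne (hn : 1 ≤ n) (p : (Fin n → Bool) × (Fin n → Bool)) : (cross n p).1 ≠ p.1 := by
  unfold cross
  split_ifs with h
  · exact bcomp_ne hn _
  · exact Ne.symm h

lemma adj_iff (hn : 1 ≤ n) {p q : (Fin n → Bool) × (Fin n → Bool)} :
    (HCN n).Adj p q ↔ (p.1 = q.1 ∧ (Qn n).Adj p.2 q.2) ∨ q = cross n p := by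
  change p ≠ q ∧ (_ ∨ CAdj n p q) ↔ _
  rw [cAdj_iff, and_iff_right_iff_imp]
  rintro (⟨-, h⟩ | h) rfl
  · exact h.ne rfl
  · exact cross_fst_ne hn p (congrArg Prod.fst h).symm

lemma adj_cross (hn : 1 ≤ n) (p : (Fin n → Bool) × (Fin n → Bool)) :
    (HCN n).Adj p (cross n p) :=
  (adj_iff hn).2 (Or.inr rfl)

lemma adj_swap {x y : Fin n → Bool} (h : x ≠ y) : (HCN n).Adj (x, y) (y, x) :=
  ⟨fun e => h (congrArg Prod.fst e), Or.inr (Or.inl ⟨h, rfl⟩)⟩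

def clusterHom (x : Fin n → Bool) : Qn n →g HCN n where
  toFun z := (x, z)
  map_rel' h := ⟨fun e => h.ne (congrArg Prod.snd e), Or.inl ⟨rfl, h⟩⟩

lemma degree_eq (hn : 1 ≤ n) (p : (Fin n → Bool) × (Fin n → Bool))
    [Fintype ((HCN n).neighborSet p)] : (HCN n).degree p = n + 1 := by
  classical
  have hN : (HCN n).neighborFinset p =
      insert (cross n p) (univ.image fun i => (p.1, Function.update p.2 i (!p.2 i))) := by
    ext q
    simp [adj_iff hn, Qn.adj_iff, Prod.ext_iff, or_comm, eq_comm]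
  have hinj : Function.Injective fun i => (p.1, Function.update p.2 i (!p.2 i)) := by
    intro i j h
    by_contra hij
    simpa [Function.update_of_ne hij] using congrFun (congrArg Prod.snd h) i
  rw [← card_neighborFinset_eq_degree, hN, card_insert_of_notMem, card_image_of_injective _ hinj,
    card_univ, Fintype.card_fin]
  simp only [mem_image, mem_univ, true_and, not_exists]
  exact fun i h => cross_fst_ne hn p (congrArg Prod.fst h).symm

lemma two_mul_add_one_lt_card (hn : 1 ≤ n) :
    2 * n + 1 < Fintype.card ((Fin n → Bool) × (Fin n → Bool)) := by
  rw [Fintype.card_prod, Fintype.card_fun, Fintype.card_bool, Fintype.card_fin]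
  have h1 : n < 2 ^ n := Nat.lt_two_pow_self
  have h2 : 2 ≤ 2 ^ n := Nat.le_self_pow (by omega) 2
  nlinarith

section faults

variable {S : Finset ((Fin n → Bool) × (Fin n → Bool))}

noncomputable def clusterFaults (S : Finset ((Fin n → Bool) × (Fin n → Bool)))
    (x : Fin n → Bool) : Finset (Fin n → Bool) :=
  S.preimage (Prod.mk x) (Prod.mk_right_injective x).injOn

@[simp] lemma mem_clusterFaults {x z : Fin n → Bool} : z ∈ clusterFaults S x ↔ (x, z) ∈ S :=
  mem_preimage

lemma reachable_induce_cluster {x z z' : Fin n → Bool} (hT : (clusterFaults S x).card < n)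
    (hz : (x, z) ∉ S) (hz' : (x, z') ∉ S) :
    ((HCN n).induce {p | p ∉ S}).Reachable ⟨(x, z), hz⟩ ⟨(x, z'), hz'⟩ :=
  reachable_induce_of_hom (Qn.induce_preconnected hT)
    ((clusterHom x).comp (Embedding.induce _).toHom) (s := {p | p ∉ S})
    (fun a h => a.2 (mem_clusterFaults.2 h)) ⟨z, mt mem_clusterFaults.1 hz⟩
    ⟨z', mt mem_clusterFaults.1 hz'⟩

lemma reachable_induce_of_clean (hn : 1 ≤ n) {x y : Fin n → Bool} (hx : ∀ w, (x, w) ∉ S)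
    (hy : ∀ w, (y, w) ∉ S) (z w : Fin n → Bool) :
    ((HCN n).induce {p | p ∉ S}).Reachable ⟨(x, z), hx z⟩ ⟨(y, w), hy w⟩ := by
  have hcard : ∀ {x}, (∀ w, (x, w) ∉ S) → (clusterFaults S x).card < n := fun hx => by
    rw [card_eq_zero.2 (eq_empty_of_forall_notMem fun w hw => hx w (mem_clusterFaults.1 hw))]
    exact hn
  obtain rfl | hxy := eq_or_ne x y
  · exact reachable_induce_cluster (hcard hx) _ _
  · exact (reachable_induce_cluster (hcard hx) (hx z) (hx y)).trans
      ((reachable_induce_of_adj (adj_swap hxy) (hx y) (hy x)).trans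
        (reachable_induce_cluster (hcard hy) (hy x) (hy w)))

lemma exists_clean_exit (hS : S.card + 1 < 2 ^ n) (x : Fin n → Bool) :
    ∃ z, z ≠ x ∧ (x, z) ∉ S ∧ ∀ w, (z, w) ∉ S := by
  classical
  -- a fault `(x, w)` excludes `z = w`, a fault `(y, w)` with `y ≠ x` excludes `z = y`
  let φ : (Fin n → Bool) × (Fin n → Bool) → Fin n → Bool := fun s => if s.1 = x then s.2 else s.1
  have hlt : (insert x (S.image φ)).card < (univ : Finset (Fin n → Bool)).card := by
    rw [card_univ, Fintype.card_fun, Fintype.card_bool, Fintype.card_fin]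
    exact (card_insert_le _ _).trans_lt (by linarith [card_image_le (s := S) (f := φ)])
  obtain ⟨z, -, hz⟩ := exists_mem_notMem_of_card_lt_card hlt
  rw [mem_insert, not_or] at hz
  exact ⟨z, hz.1, fun h => hz.2 (mem_image.2 ⟨_, h, if_pos rfl⟩),
    fun w h => hz.2 (mem_image.2 ⟨_, h, if_neg hz.1⟩)⟩

lemma exists_reachable_induce_clean (hn : 1 ≤ n) (hS : S.card ≤ n)
    {p : (Fin n → Bool) × (Fin n → Bool)} (hp : p ∉ S) :
    ∃ y w, ∃ hy : ∀ w, (y, w) ∉ S,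
      ((HCN n).induce {p | p ∉ S}).Reachable ⟨p, hp⟩ ⟨(y, w), hy w⟩ := by
  obtain ⟨x, z⟩ := p
  by_cases hx : ∀ w, (x, w) ∉ S
  · exact ⟨x, z, hx, .rfl⟩
  by_cases hS₁ : ∀ s ∈ S, s.1 = x
  · exact ⟨(cross n (x, z)).1, (cross n (x, z)).2,
      fun w h => cross_fst_ne hn (x, z) (hS₁ (_, w) h),
      reachable_induce_of_adj (adj_cross hn (x, z)) _ _⟩
  push Not at hx hS₁
  obtain ⟨w₀, hw₀⟩ := hx
  obtain ⟨s, hs, hsx⟩ := hS₁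
  have hT : (clusterFaults S x).card < S.card :=
    card_preimage_lt (Prod.mk_right_injective x) hs (by rintro ⟨w, rfl⟩; exact hsx rfl)
  have h2 : 1 < S.card := one_lt_card.2 ⟨_, hw₀, s, hs, fun h => hsx (congrArg Prod.fst h).symm⟩
  have hpow : S.card + 1 < 2 ^ n := by
    obtain ⟨m, rfl⟩ : ∃ m, n = m + 1 := ⟨n - 1, by omega⟩
    have := Nat.lt_two_pow_self (n := m)
    rw [pow_succ]
    omega
  obtain ⟨z', hz'x, hz', hclean⟩ := exists_clean_exit hpow x
  exact ⟨z', x, hclean, (reachable_induce_cluster (hT.trans_le hS) hp hz').trans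
    (reachable_induce_of_adj (adj_swap hz'x.symm) hz' (hclean x))⟩

theorem induce_preconnected (hn : 1 ≤ n) (hS : S.card ≤ n) :
    ((HCN n).induce {p | p ∉ S}).Preconnected := by
  rintro ⟨p, hp⟩ ⟨q, hq⟩
  obtain ⟨x, z, hx, hpx⟩ := exists_reachable_induce_clean hn hS hp
  obtain ⟨y, w, hy, hqy⟩ := exists_reachable_induce_clean hn hS hq
  exact hpx.trans ((reachable_induce_of_clean hn hx hy z w).trans hqy.symm)

end faults

end HCN

open scoped Classical in
/-- κ(HCN_n) = λ(HCN_n) = n+1 for n ≥ 1: removing at most n vertices (or edges)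
leaves HCN_n connected, while some set of n+1 vertices (or edges) disconnects it. -/
theorem stmt19 (n : ℕ) (hn : 1 ≤ n) :
    (∀ S : Finset ((Fin n → Bool) × (Fin n → Bool)), S.card ≤ n →
      ((HCN n).induce {v | v ∉ S}).Connected) ∧
    (∃ S : Finset ((Fin n → Bool) × (Fin n → Bool)), S.card = n + 1 ∧
      ({v | v ∉ S} : Set ((Fin n → Bool) × (Fin n → Bool))).Nonempty ∧
      ¬ ((HCN n).induce {v | v ∉ S}).Connected) ∧
    (∀ F : Finset (Sym2 ((Fin n → Bool) × (Fin n → Bool))), F.card ≤ n →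
      ((HCN n).deleteEdges ↑F).Connected) ∧
    (∃ F : Finset (Sym2 ((Fin n → Bool) × (Fin n → Bool))),
      ↑F ⊆ (HCN n).edgeSet ∧ F.card = n + 1 ∧
      ¬ ((HCN n).deleteEdges ↑F).Connected) := by
  have hcard := HCN.two_mul_add_one_lt_card hn
  have hdeg := HCN.degree_eq hn default
  refine ⟨fun S hS => ?_, ?_, fun F hF => ?_, ?_⟩
  · obtain ⟨v, -, hv⟩ := exists_mem_notMem_of_card_lt_card (s := S) (t := univ) (by
      rw [card_univ]; omega)
    have : Nonempty {v | v ∉ S} := ⟨⟨v, hv⟩⟩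
    exact ⟨HCN.induce_preconnected hn hS⟩
  · simpa only [hdeg] using
      exists_finset_card_eq_degree_not_connected_induce (G := HCN n) default (by omega)
  · exact ⟨preconnected_deleteEdges_of_preconnected_induce (by omega)
      (fun S hS => HCN.induce_preconnected hn hS) hF⟩
  · have : Nontrivial ((Fin n → Bool) × (Fin n → Bool)) :=
      Fintype.one_lt_card_iff_nontrivial.1 (by omega)
    simpa only [hdeg] using
      exists_finset_card_eq_degree_not_connected_deleteEdges (G := HCN n) default
end
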